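/- Let R = k[x,y,z], and let I_t be a grade 3 homogeneous compressed Gorenstein ideal of socle degree 2s−1 (s ≥ 3), minimally generated by φ_1,…,φ_{s+1} of degree s and ψ_1,…,ψ_b of degree s+1. Then for any 1 ≤ ℓ ≤ s+1, the ideal J = (φ_1,…,φ_{s+1−ℓ}, ψ_1,…,ψ_b) + R_+ φ_{s+2−ℓ} + ⋯ + R_+ φ_{s+1} defines a ring of Cohen–Macaulay type ℓ+1, i.e., dim_k Tor_3^R(R/J, k) = ℓ+1. In particular, (I_t)_{≥ s+1} defines a ring of type s+2. -/

import Mathlib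

/-!
For a homogeneous ideal `J`, the type of `R/J` is `Σ_n socdim J n`, where
`socdim J n = dim (J : R_+)_n - dim J_n`, because `(J : R_+)/J` is the direct sum of its graded
pieces. The trimmed ideal `J` agrees with `I_t` in every degree except `s`, where `J_s` is spanned
by the `s + 1 - ℓ` untrimmed `φ_i`, whereas `(I_t)_s` has the `s + 1` minimal generators `φ_i`
as a basis. As `(J : R_+)_n` only depends on `J_{n+1}`, the socles of `R/J` and `R/I_t` agree above
degree `s`, giving the Gorenstein socle element in degree `2s - 1`, while in degree `s`
`(J : R_+)_s = (I_t : R_+)_s = (I_t)_s` contributes `ℓ` new socle elements.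
-/

open MvPolynomial Module

variable (k : Type) [Field k]

/-- degree-`n` piece of `k[x,y,z]` -/
noncomputable abbrev gpiece (n : ℕ) : Submodule k (MvPolynomial (Fin 3) k) :=
  MvPolynomial.homogeneousSubmodule (Fin 3) k n

/-- the irrelevant maximal ideal -/
noncomputable def Rplus : Ideal (MvPolynomial (Fin 3) k) :=
  Ideal.span (Set.range MvPolynomial.X)

/-- dimension of degree-`n` piece of an ideal -/
noncomputable def pdim (I : Ideal (MvPolynomial (Fin 3) k)) (n : ℕ) : ℕ :=
  Module.finrank k ↥(I.restrictScalars k ⊓ gpiece k n)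

/-- Hilbert function of `R/I` -/
noncomputable def hf (I : Ideal (MvPolynomial (Fin 3) k)) (n : ℕ) : ℕ :=
  Module.finrank k ↥(gpiece k n) - pdim k I n

/-- dimension of the degree-`n` piece of the socle of `R/I` -/
noncomputable def socdim (I : Ideal (MvPolynomial (Fin 3) k)) (n : ℕ) : ℕ :=
  hf k I n - hf k (Submodule.colon I (Rplus k)) n

/-- `R/I` is Artinian Gorenstein (grade 3) with socle degree `t` -/
def IsArtinianGorenstein (I : Ideal (MvPolynomial (Fin 3) k)) (t : ℕ) : Prop :=
  (∀ n, socdim k I n = if n = t then 1 else 0) ∧ (∀ n, t < n → hf k I n = 0)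

/-- upper bound for the Hilbert function coming from a socle of type `k(-s)^ℓ ⊕ k(-2s+1)` -/
def cobound (s ℓ n : ℕ) : ℕ :=
  (if n ≤ s then ℓ * Nat.choose (s - n + 2) 2 else 0) +
    (if n ≤ 2 * s - 1 then Nat.choose (2 * s - 1 - n + 2) 2 else 0)

/-- `I` defines a compressed ring with socle `k(-s)^ℓ ⊕ k(-2s+1)` -/
def IsCompressedWithSocle (I : Ideal (MvPolynomial (Fin 3) k)) (s ℓ : ℕ) : Prop :=
  (∀ n, hf k I n = min (Nat.choose (n + 2) 2) (cobound s ℓ n)) ∧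
    (∀ n, socdim k I n = if n = s then ℓ else if n = 2 * s - 1 then 1 else 0)

/-- Cohen–Macaulay type  = total dimension of the socle of `R/I` -/
noncomputable def typeOf (I : Ideal (MvPolynomial (Fin 3) k)) : ℕ :=
  Module.finrank k
    ↥((Submodule.torsionBySet (MvPolynomial (Fin 3) k) (MvPolynomial (Fin 3) k ⧸ I)
        (Rplus k : Set (MvPolynomial (Fin 3) k))).restrictScalars k)

/-- minimal number of generators `μ(I) = dim_k I/(R_+ I)` -/
noncomputable def nu (I : Ideal (MvPolynomial (Fin 3) k)) : ℕ :=
  Module.finrank k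
    (↥(I.restrictScalars k) ⧸
      ((Rplus k * I : Ideal (MvPolynomial (Fin 3) k)).restrictScalars k).comap
        (I.restrictScalars k).subtype)

/-- dim_k of `I'/I` for nested ideals -/
noncomputable def qdim (I I' : Ideal (MvPolynomial (Fin 3) k)) : ℕ :=
  Module.finrank k
    (↥(I'.restrictScalars k) ⧸
      (I.restrictScalars k).comap (I'.restrictScalars k).subtype)

theorem Submodule.finrank_quotient_comap_subtype {𝕜 M : Type*} [Field 𝕜] [AddCommGroup M]
    [Module 𝕜 M] (p q : Submodule 𝕜 M) [FiniteDimensional 𝕜 q] :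
    finrank 𝕜 (q ⧸ p.comap q.subtype) = finrank 𝕜 q - finrank 𝕜 ↥(p ⊓ q) := by
  have hcomap : p.comap q.subtype = (p ⊓ q).comap q.subtype := by
    ext x
    simp
  have h := (p.comap q.subtype).finrank_quotient_add_finrank
  rw [hcomap, (Submodule.comapSubtypeEquivOfLe inf_le_right).finrank_eq] at h
  rw [hcomap]
  omega

noncomputable def Ideal.torsionBySetQuotientEquiv {𝕜 A : Type*} [CommRing 𝕜] [CommRing A]
    [Algebra 𝕜 A] (J : Ideal A) (S : Set A) :
    ↥((Submodule.torsionBySet A (A ⧸ J) S).restrictScalars 𝕜) ≃ₗ[𝕜]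
      ↥((J.colon S).restrictScalars 𝕜) ⧸
        (J.restrictScalars 𝕜).comap ((J.colon S).restrictScalars 𝕜).subtype :=
  let f := (J.mkQ.restrictScalars 𝕜).comp ((J.colon S).restrictScalars 𝕜).subtype
  have hker : LinearMap.ker f =
      (J.restrictScalars 𝕜).comap ((J.colon S).restrictScalars 𝕜).subtype := by
    ext x
    exact Submodule.Quotient.mk_eq_zero J
  have hrange :
      LinearMap.range f = (Submodule.torsionBySet A (A ⧸ J) S).restrictScalars 𝕜 := by
    ext y
    obtain ⟨a, rfl⟩ := Submodule.Quotient.mk_surjective J y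
    have hcolon : a ∈ J.colon S ↔ ∀ s ∈ S, s • a ∈ J := by
      simp only [Submodule.mem_colon, smul_eq_mul, mul_comm]
    simp only [LinearMap.mem_range, Submodule.restrictScalars_mem, Submodule.mem_torsionBySet_iff,
      Subtype.forall, ← Submodule.Quotient.mk_smul, Submodule.Quotient.mk_eq_zero, ← hcolon]
    refine ⟨fun ⟨y, hy⟩ => ?_, fun ha => ⟨⟨a, ha⟩, rfl⟩⟩
    have hya : (y : A) - a ∈ J := (Submodule.Quotient.eq J).1 hy
    simpa using sub_mem y.2 (Ideal.le_colon hya)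
  (LinearEquiv.ofEq _ _ hrange.symm).trans
    (f.quotKerEquivRange.symm.trans (Submodule.quotEquivOfEq _ _ hker))

namespace MvPolynomial

variable {σ R : Type*}

section CommSemiring

variable [CommSemiring R]

attribute [local instance] gradedAlgebra

theorem homogeneousComponent_mul_of_isHomogeneous {g : MvPolynomial σ R} {e : ℕ}
    (hg : g.IsHomogeneous e) (r : MvPolynomial σ R) (n : ℕ) :
    homogeneousComponent n (r * g) =
      if e ≤ n then homogeneousComponent (n - e) r * g else 0 := by
  have hg' : g ∈ homogeneousSubmodule σ R e := (mem_homogeneousSubmodule e g).2 hg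
  simp only [← decomposition.decompose'_apply]
  split_ifs with h
  · exact DirectSum.coe_decompose_mul_of_right_mem_of_le _ hg' h
  · exact DirectSum.coe_decompose_mul_of_right_mem_of_not_le _ hg' h

theorem IsHomogeneous.mem_idealOfVars {p : MvPolynomial σ R} {n : ℕ} (hp : p.IsHomogeneous n)
    (hn : n ≠ 0) : p ∈ idealOfVars σ R := by
  rw [← pow_one (idealOfVars σ R), mem_pow_idealOfVars_iff]
  intro d hd
  have hdeg := hp (mem_support_iff.1 hd)
  rw [Finsupp.degree_eq_weight_one]
  exact Nat.one_le_iff_ne_zero.2 (hdeg ▸ hn)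

theorem homogeneousComponent_mem_of_mem_span {S : Set (MvPolynomial σ R)}
    {P : AddSubmonoid (MvPolynomial σ R)} {n : ℕ}
    (hP : ∀ r, ∀ g ∈ S, homogeneousComponent n (r * g) ∈ P) {f : MvPolynomial σ R}
    (hf : f ∈ Ideal.span S) : homogeneousComponent n f ∈ P := by
  suffices ∀ r, homogeneousComponent n (r * f) ∈ P by simpa using this 1
  induction hf using Submodule.span_induction with
  | mem g hg => exact fun r => hP r g hg
  | zero => simp
  | add x y _ _ hx hy => exact fun r => by simpa [mul_add] using P.add_mem (hx r) (hy r)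
  | smul a x _ hx => exact fun r => by simpa [mul_assoc] using hx (r * a)

theorem restrictScalars_span_inf_homogeneousSubmodule {S S₀ : Set (MvPolynomial σ R)} {d : ℕ}
    (hS₀ : ∀ g ∈ S₀, g ∈ S ∧ g.IsHomogeneous d)
    (hS : ∀ g ∈ S, g ∉ S₀ → ∃ e, d < e ∧ g.IsHomogeneous e) :
    (Ideal.span S).restrictScalars R ⊓ homogeneousSubmodule σ R d = Submodule.span R S₀ := by
  refine le_antisymm (fun f ⟨hf, hfd⟩ => ?_) (Submodule.span_le.2 fun g hg =>
    ⟨Ideal.subset_span (hS₀ g hg).1, (mem_homogeneousSubmodule d g).2 (hS₀ g hg).2⟩)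
  rw [← homogeneousComponent_eq_self ((mem_homogeneousSubmodule d f).1 hfd)]
  refine homogeneousComponent_mem_of_mem_span (P := (Submodule.span R S₀).toAddSubmonoid)
    (fun r g hg => ?_) hf
  by_cases hg₀ : g ∈ S₀
  · rw [homogeneousComponent_mul_of_isHomogeneous (hS₀ g hg₀).2, if_pos le_rfl, Nat.sub_self,
      homogeneousComponent_zero, C_mul']
    exact Submodule.smul_mem _ _ (Submodule.subset_span hg₀)
  · obtain ⟨e, hde, hge⟩ := hS g hg hg₀
    rw [homogeneousComponent_mul_of_isHomogeneous hge, if_neg (by omega)]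
    exact zero_mem _

theorem homogeneousComponent_mem_idealOfVars_mul {S : Set (MvPolynomial σ R)} {n : ℕ}
    (hS : ∀ g ∈ S, ∃ e < n, g.IsHomogeneous e) {f : MvPolynomial σ R}
    (hf : f ∈ Ideal.span S) :
    homogeneousComponent n f ∈ idealOfVars σ R * Ideal.span S := by
  refine homogeneousComponent_mem_of_mem_span
    (P := (idealOfVars σ R * Ideal.span S).toAddSubmonoid) (fun r g hg => ?_) hf
  obtain ⟨e, hen, hge⟩ := hS g hg
  rw [homogeneousComponent_mul_of_isHomogeneous hge, if_pos hen.le]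
  exact Ideal.mul_mem_mul ((homogeneousComponent_isHomogeneous _ _).mem_idealOfVars (by omega))
    (Ideal.subset_span hg)

theorem ideal_isHomogeneous_iff {I : Ideal (MvPolynomial σ R)} :
    I.IsHomogeneous (homogeneousSubmodule σ R) ↔
      ∀ f ∈ I, ∀ n, homogeneousComponent n f ∈ I := by
  refine ⟨fun h f hf n => homogeneousComponent_mem_of_mem h hf n, fun h n f hf => ?_⟩
  convert h f hf n using 1
  exact decomposition.decompose'_apply f n

end CommSemiring

section CommRing

variable [CommRing R]

theorem sub_C_constantCoeff_mem_idealOfVars (p : MvPolynomial σ R) :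
    p - C (constantCoeff p) ∈ idealOfVars σ R := by
  rw [← pow_one (idealOfVars σ R), mem_pow_idealOfVars_iff']
  intro d hd
  obtain rfl : d = 0 := (Finsupp.degree_eq_zero_iff d).1 (by omega)
  simp [constantCoeff_eq]

variable (J K : Submodule R (MvPolynomial σ R))

/-- The degree-`n` piece of `K / J`. A type synonym: for products of the bare quotients
`K_n / (J ∩ K_n)`, instance search fails to find the module structure. -/
def QuotientGradedPiece (n : ℕ) : Type _ :=
  ↥(K ⊓ homogeneousSubmodule σ R n) ⧸ J.comap (K ⊓ homogeneousSubmodule σ R n).subtype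

noncomputable instance (n : ℕ) : AddCommGroup (QuotientGradedPiece J K n) :=
  inferInstanceAs (AddCommGroup (_ ⧸ _))

noncomputable instance (n : ℕ) : Module R (QuotientGradedPiece J K n) :=
  inferInstanceAs (Module R (_ ⧸ _))

variable (F : Finset ℕ)

noncomputable def homogeneousComponentsModMap
    (hK : ∀ f ∈ K, ∀ n, homogeneousComponent n f ∈ K) :
    K →ₗ[R] ((n : F) → QuotientGradedPiece J K n) :=
  LinearMap.pi fun n =>
    (Submodule.mkQ (J.comap (K ⊓ homogeneousSubmodule σ R n).subtype)).comp <|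
      LinearMap.codRestrict (K ⊓ homogeneousSubmodule σ R n)
        ((homogeneousComponent (n : ℕ)).comp K.subtype) fun x =>
          Submodule.mem_inf.2
            ⟨hK x x.2 n, homogeneousComponent_mem (n : ℕ) (x : MvPolynomial σ R)⟩

variable {J K F}

theorem homogeneousComponentsModMap_apply (hK : ∀ f ∈ K, ∀ n, homogeneousComponent n f ∈ K)
    (x : K) (n : F) :
    homogeneousComponentsModMap J K F hK x n =
      (Submodule.Quotient.mk ⟨homogeneousComponent n (x : MvPolynomial σ R),
        Submodule.mem_inf.2
          ⟨hK x x.2 n, homogeneousComponent_mem (n : ℕ) (x : MvPolynomial σ R)⟩⟩ :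
        ↥(K ⊓ homogeneousSubmodule σ R n) ⧸
          J.comap (K ⊓ homogeneousSubmodule σ R n).subtype) :=
  rfl

theorem homogeneousComponentsModMap_apply_eq_zero_iff
    (hK : ∀ f ∈ K, ∀ n, homogeneousComponent n f ∈ K) (x : K) (n : F) :
    homogeneousComponentsModMap J K F hK x n = 0 ↔
      homogeneousComponent n (x : MvPolynomial σ R) ∈ J := by
  rw [homogeneousComponentsModMap_apply]
  exact Submodule.Quotient.mk_eq_zero _

theorem ker_homogeneousComponentsModMap (hJ : ∀ f ∈ J, ∀ n, homogeneousComponent n f ∈ J)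
    (hK : ∀ f ∈ K, ∀ n, homogeneousComponent n f ∈ K)
    (hF : ∀ f ∈ K, ∀ n ∉ F, homogeneousComponent n f ∈ J) :
    LinearMap.ker (homogeneousComponentsModMap J K F hK) = J.comap K.subtype := by
  ext x
  rw [LinearMap.mem_ker, Submodule.mem_comap, Submodule.subtype_apply, _root_.funext_iff]
  simp only [Pi.zero_apply, homogeneousComponentsModMap_apply_eq_zero_iff, Subtype.forall]
  refine ⟨fun h => ?_, fun h n _ => hJ x h n⟩
  rw [← sum_homogeneousComponent (x : MvPolynomial σ R)]
  refine Submodule.sum_mem _ fun n _ => ?_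
  by_cases hn : n ∈ F
  · exact h n hn
  · exact hF x x.2 n hn

theorem homogeneousComponentsModMap_surjective
    (hK : ∀ f ∈ K, ∀ n, homogeneousComponent n f ∈ K) :
    Function.Surjective (homogeneousComponentsModMap J K F hK) := by
  intro y
  choose z hz using fun n : F => Submodule.mkQ_surjective
    (J.comap (K ⊓ homogeneousSubmodule σ R n).subtype) (y n)
  refine ⟨⟨∑ n, (z n : MvPolynomial σ R),
    Submodule.sum_mem _ fun n _ => (Submodule.mem_inf.1 (z n).2).1⟩, ?_⟩
  funext n
  rw [homogeneousComponentsModMap_apply, ← hz n]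
  congr 1
  ext1
  change homogeneousComponent n (∑ m, (z m : MvPolynomial σ R)) = z n
  rw [map_sum, Finset.sum_eq_single n (fun m _ hmn => ?_) (by simp),
    homogeneousComponent_of_mem (Submodule.mem_inf.1 (z n).2).2, if_pos rfl]
  rw [homogeneousComponent_of_mem (Submodule.mem_inf.1 (z m).2).2,
    if_neg fun h => hmn (Subtype.ext h).symm]

noncomputable def quotientEquivPiOfHomogeneous
    (hJ : ∀ f ∈ J, ∀ n, homogeneousComponent n f ∈ J)
    (hK : ∀ f ∈ K, ∀ n, homogeneousComponent n f ∈ K)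
    (hF : ∀ f ∈ K, ∀ n ∉ F, homogeneousComponent n f ∈ J) :
    (K ⧸ J.comap K.subtype) ≃ₗ[R] ((n : F) → QuotientGradedPiece J K n) :=
  (Submodule.quotEquivOfEq _ _ (ker_homogeneousComponentsModMap hJ hK hF).symm).trans
    (LinearMap.quotKerEquivOfSurjective (homogeneousComponentsModMap J K F hK)
      (homogeneousComponentsModMap_surjective hK))

end CommRing

section Field

variable {𝕜 : Type*} [Field 𝕜]

instance [Finite σ] (n : ℕ) : FiniteDimensional 𝕜 (homogeneousSubmodule σ 𝕜 n) :=
  Submodule.finiteDimensional_of_le (S₂ := restrictTotalDegree σ 𝕜 n) fun p hp =>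
    (mem_restrictTotalDegree σ n p).2 ((mem_homogeneousSubmodule n p).1 hp).totalDegree_le

instance [Finite σ] (J K : Submodule 𝕜 (MvPolynomial σ 𝕜)) (n : ℕ) :
    FiniteDimensional 𝕜 (QuotientGradedPiece J K n) :=
  inferInstanceAs (FiniteDimensional 𝕜
    (↥(K ⊓ homogeneousSubmodule σ 𝕜 n) ⧸
      J.comap (K ⊓ homogeneousSubmodule σ 𝕜 n).subtype))

theorem finrank_quotientGradedPiece [Finite σ] {J K : Submodule 𝕜 (MvPolynomial σ 𝕜)}
    (hJK : J ≤ K) (n : ℕ) :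
    finrank 𝕜 (QuotientGradedPiece J K n) =
      finrank 𝕜 ↥(K ⊓ homogeneousSubmodule σ 𝕜 n) -
        finrank 𝕜 ↥(J ⊓ homogeneousSubmodule σ 𝕜 n) := by
  change finrank 𝕜 (↥(K ⊓ homogeneousSubmodule σ 𝕜 n) ⧸
    J.comap (K ⊓ homogeneousSubmodule σ 𝕜 n).subtype) = _
  rw [Submodule.finrank_quotient_comap_subtype, ← inf_assoc, inf_eq_left.2 hJK]

theorem finrank_quotient_eq_sum_of_homogeneous [Finite σ]
    {J K : Submodule 𝕜 (MvPolynomial σ 𝕜)} (hJK : J ≤ K)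
    (hJ : ∀ f ∈ J, ∀ n, homogeneousComponent n f ∈ J)
    (hK : ∀ f ∈ K, ∀ n, homogeneousComponent n f ∈ K) (F : Finset ℕ)
    (hF : ∀ f ∈ K, ∀ n ∉ F, homogeneousComponent n f ∈ J) :
    finrank 𝕜 (K ⧸ J.comap K.subtype) = ∑ n ∈ F,
      (finrank 𝕜 ↥(K ⊓ homogeneousSubmodule σ 𝕜 n) -
        finrank 𝕜 ↥(J ⊓ homogeneousSubmodule σ 𝕜 n)) := by
  rw [(quotientEquivPiOfHomogeneous hJ hK hF).finrank_eq, Module.finrank_pi_fintype,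
    ← Finset.sum_coe_sort F]
  exact Finset.sum_congr rfl fun n _ => finrank_quotientGradedPiece hJK n

end Field

end MvPolynomial

section Socle

variable {k}

attribute [local instance] MvPolynomial.gradedAlgebra

theorem mem_colon_Rplus_iff {I : Ideal (MvPolynomial (Fin 3) k)} {f : MvPolynomial (Fin 3) k} :
    f ∈ I.colon (Rplus k) ↔ ∀ i, f * X i ∈ I := by
  rw [Rplus, Ideal.colon_span, Submodule.mem_colon, Set.forall_mem_range]
  rfl

theorem Ideal.IsHomogeneous.colon_Rplus {I : Ideal (MvPolynomial (Fin 3) k)}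
    (hI : I.IsHomogeneous (homogeneousSubmodule (Fin 3) k)) :
    (I.colon (Rplus k)).IsHomogeneous (homogeneousSubmodule (Fin 3) k) := by
  rw [ideal_isHomogeneous_iff] at hI ⊢
  intro f hf n
  rw [mem_colon_Rplus_iff] at hf ⊢
  intro i
  have hXi := homogeneousComponent_mul_of_isHomogeneous (isHomogeneous_X k i) f (n + 1)
  rw [if_pos (by omega), Nat.add_sub_cancel] at hXi
  exact hXi ▸ hI _ (hf i) (n + 1)

theorem pdim_le_pdim_colon_Rplus (I : Ideal (MvPolynomial (Fin 3) k)) (n : ℕ) :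
    pdim k I n ≤ pdim k (I.colon (Rplus k)) n :=
  Submodule.finrank_mono (inf_le_inf_right _ fun _ hx => Ideal.le_colon hx)

theorem socdim_eq_pdim_sub (I : Ideal (MvPolynomial (Fin 3) k)) (n : ℕ) :
    socdim k I n = pdim k (I.colon (Rplus k)) n - pdim k I n := by
  have hK : pdim k (I.colon (Rplus k)) n ≤ finrank k (gpiece k n) :=
    Submodule.finrank_mono inf_le_right
  have hIK := pdim_le_pdim_colon_Rplus I n
  unfold socdim hf
  omega

theorem colon_Rplus_inf_gpiece_eq_of_socdim_eq_zero {I : Ideal (MvPolynomial (Fin 3) k)} {n : ℕ}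
    (h : socdim k I n = 0) :
    (I.colon (Rplus k)).restrictScalars k ⊓ gpiece k n = I.restrictScalars k ⊓ gpiece k n := by
  refine (Submodule.eq_of_le_of_finrank_le
    (inf_le_inf_right _ fun _ hx => Ideal.le_colon hx) ?_).symm
  have hIK := pdim_le_pdim_colon_Rplus I n
  rw [socdim_eq_pdim_sub] at h
  unfold pdim at h hIK
  omega

theorem typeOf_eq_sum_socdim {I : Ideal (MvPolynomial (Fin 3) k)}
    (hI : I.IsHomogeneous (homogeneousSubmodule (Fin 3) k)) (F : Finset ℕ)
    (hF : ∀ n ∉ F, socdim k I n = 0) :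
    typeOf k I = ∑ n ∈ F, socdim k I n := by
  have hI' := ideal_isHomogeneous_iff.1 hI
  have hK := ideal_isHomogeneous_iff.1 hI.colon_Rplus
  rw [typeOf, (Ideal.torsionBySetQuotientEquiv I _).finrank_eq,
    finrank_quotient_eq_sum_of_homogeneous (fun _ hx => Ideal.le_colon hx) hI' hK F]
  · exact Finset.sum_congr rfl fun n _ => (socdim_eq_pdim_sub I n).symm
  · intro f hf n hn
    have hmem : homogeneousComponent n f ∈ (I.colon (Rplus k)).restrictScalars k ⊓ gpiece k n :=
      ⟨hK f hf n, homogeneousComponent_mem n f⟩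
    rw [colon_Rplus_inf_gpiece_eq_of_socdim_eq_zero (hF n hn)] at hmem
    exact hmem.1

theorem colon_Rplus_inf_gpiece_eq {I J : Ideal (MvPolynomial (Fin 3) k)} {n : ℕ}
    (h : I.restrictScalars k ⊓ gpiece k (n + 1) = J.restrictScalars k ⊓ gpiece k (n + 1)) :
    (I.colon (Rplus k)).restrictScalars k ⊓ gpiece k n =
      (J.colon (Rplus k)).restrictScalars k ⊓ gpiece k n := by
  ext f
  simp only [Submodule.mem_inf, Submodule.restrictScalars_mem, mem_colon_Rplus_iff,
    and_congr_left_iff]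
  intro hf
  refine forall_congr' fun i => ?_
  have hfX : f * X i ∈ gpiece k (n + 1) := by
    simpa using SetLike.mul_mem_graded hf ((mem_homogeneousSubmodule 1 _).2 (isHomogeneous_X k i))
  have hI := SetLike.ext_iff.1 h (f * X i)
  rwa [Submodule.mem_inf, Submodule.mem_inf, and_iff_left hfX, and_iff_left hfX] at hI

theorem socdim_eq_of_inf_gpiece_eq {I J : Ideal (MvPolynomial (Fin 3) k)} {n : ℕ}
    (hn : I.restrictScalars k ⊓ gpiece k n = J.restrictScalars k ⊓ gpiece k n)
    (hn' : I.restrictScalars k ⊓ gpiece k (n + 1) = J.restrictScalars k ⊓ gpiece k (n + 1)) :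
    socdim k I n = socdim k J n := by
  rw [socdim_eq_pdim_sub, socdim_eq_pdim_sub, pdim, pdim, pdim, pdim, hn,
    colon_Rplus_inf_gpiece_eq hn']

theorem socdim_le_of_le {I J : Ideal (MvPolynomial (Fin 3) k)} (hJI : J ≤ I) {n : ℕ}
    (hn : J.restrictScalars k ⊓ gpiece k n = I.restrictScalars k ⊓ gpiece k n) :
    socdim k J n ≤ socdim k I n := by
  have hK : pdim k (J.colon (Rplus k)) n ≤ pdim k (I.colon (Rplus k)) n :=
    Submodule.finrank_mono (inf_le_inf_right _ (Submodule.colon_mono hJI le_rfl))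
  rw [socdim_eq_pdim_sub, socdim_eq_pdim_sub]
  unfold pdim at hK ⊢
  rw [hn]
  omega

theorem linearIndependent_of_nu_eq_card {ι : Type*} [Fintype ι]
    (G : ι → MvPolynomial (Fin 3) k) (h : nu k (Ideal.span (Set.range G)) = Fintype.card ι) :
    LinearIndependent k G := by
  set I := Ideal.span (Set.range G)
  set N := ((Rplus k * I).restrictScalars k).comap (I.restrictScalars k).subtype
  let w : ι → I.restrictScalars k := fun i => ⟨G i, Ideal.subset_span ⟨i, rfl⟩⟩
  have hspan : ⊤ ≤ Submodule.span k (Set.range (N.mkQ ∘ w)) := by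
    rintro x -
    obtain ⟨y, rfl⟩ := N.mkQ_surjective x
    obtain ⟨c, hc⟩ := Ideal.mem_span_range_iff_exists_fun.1 y.2
    have hmem :
        (y : MvPolynomial (Fin 3) k) - ∑ i, constantCoeff (c i) • G i ∈ Rplus k * I := by
      rw [← hc, ← Finset.sum_sub_distrib]
      refine Ideal.sum_mem _ fun i _ => ?_
      rw [smul_eq_C_mul, ← sub_mul]
      exact Ideal.mul_mem_mul (sub_C_constantCoeff_mem_idealOfVars _)
        (Ideal.subset_span ⟨i, rfl⟩)
    have hy : N.mkQ y = ∑ i, constantCoeff (c i) • N.mkQ (w i) := by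
      simp only [← map_smul, ← map_sum]
      rw [Submodule.mkQ_apply, Submodule.mkQ_apply, Submodule.Quotient.eq, Submodule.mem_comap,
        Submodule.restrictScalars_mem]
      simpa [w] using hmem
    rw [hy]
    exact Submodule.sum_mem _ fun i _ =>
      Submodule.smul_mem _ _ (Submodule.subset_span ⟨i, rfl⟩)
  have hw := (linearIndependent_of_top_le_span_of_card_eq_finrank hspan h.symm).of_comp N.mkQ
  exact hw.map' (I.restrictScalars k).subtype (Submodule.ker_subtype _)

end Socle

section Trimming

variable {k} {a b : ℕ}

noncomputable def trimmedIdeal (φ : Fin a → MvPolynomial (Fin 3) k)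
    (ψ : Fin b → MvPolynomial (Fin 3) k) (m : ℕ) : Ideal (MvPolynomial (Fin 3) k) :=
  Ideal.span ((φ '' {i : Fin a | (i : ℕ) < m}) ∪ Set.range ψ) ⊔
    ⨆ j : Fin a, if m ≤ (j : ℕ) then Rplus k * Ideal.span {φ j} else ⊥

def trimmedGenerators (φ : Fin a → MvPolynomial (Fin 3) k)
    (ψ : Fin b → MvPolynomial (Fin 3) k) (m : ℕ) : Set (MvPolynomial (Fin 3) k) :=
  φ '' {i : Fin a | (i : ℕ) < m} ∪ Set.range ψ ∪
    ⋃ j : Fin a, if m ≤ (j : ℕ) then Set.range fun i => X i * φ j else ∅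

theorem Rplus_mul_span_singleton (g : MvPolynomial (Fin 3) k) :
    Rplus k * Ideal.span {g} = Ideal.span (Set.range fun i => X i * g) := by
  rw [Rplus, Ideal.span_mul_span', Set.mul_singleton, ← Set.range_comp]
  rfl

theorem trimmedIdeal_eq_span (φ : Fin a → MvPolynomial (Fin 3) k)
    (ψ : Fin b → MvPolynomial (Fin 3) k) (m : ℕ) :
    trimmedIdeal φ ψ m = Ideal.span (trimmedGenerators φ ψ m) := by
  rw [trimmedIdeal, trimmedGenerators, Ideal.span_union (_ ∪ _), Ideal.span_iUnion]
  congr 1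
  refine iSup_congr fun j => ?_
  split_ifs
  · exact Rplus_mul_span_singleton (φ j)
  · exact Ideal.span_empty.symm

variable {s m : ℕ} {φ : Fin a → MvPolynomial (Fin 3) k} {ψ : Fin b → MvPolynomial (Fin 3) k}

theorem isHomogeneous_of_mem_trimmedGenerators (hφ : ∀ i, (φ i).IsHomogeneous s)
    (hψ : ∀ i, (ψ i).IsHomogeneous (s + 1)) {g : MvPolynomial (Fin 3) k}
    (hg : g ∈ trimmedGenerators φ ψ m) :
    g ∈ φ '' {i : Fin a | (i : ℕ) < m} ∨ g.IsHomogeneous (s + 1) := by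
  rcases hg with (hg | ⟨i, rfl⟩) | hg
  · exact Or.inl hg
  · exact Or.inr (hψ i)
  · obtain ⟨j, hj⟩ := Set.mem_iUnion.1 hg
    split_ifs at hj
    · obtain ⟨i, rfl⟩ := hj
      exact Or.inr (add_comm 1 s ▸ (isHomogeneous_X k i).mul (hφ j))
    · simp at hj

attribute [local instance] MvPolynomial.gradedAlgebra in
theorem isHomogeneous_trimmedIdeal (hφ : ∀ i, (φ i).IsHomogeneous s)
    (hψ : ∀ i, (ψ i).IsHomogeneous (s + 1)) :
    (trimmedIdeal φ ψ m).IsHomogeneous (homogeneousSubmodule (Fin 3) k) := by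
  rw [trimmedIdeal_eq_span]
  refine Ideal.homogeneous_span _ _ fun g hg => ?_
  rcases isHomogeneous_of_mem_trimmedGenerators hφ hψ hg with ⟨i, -, rfl⟩ | hg
  · exact ⟨s, hφ i⟩
  · exact ⟨s + 1, hg⟩

theorem trimmedIdeal_le_span :
    trimmedIdeal φ ψ m ≤ Ideal.span (Set.range φ ∪ Set.range ψ) := by
  rw [trimmedIdeal_eq_span, Ideal.span_le]
  rintro g ((⟨i, -, rfl⟩ | ⟨i, rfl⟩) | hg)
  · exact Ideal.subset_span (Or.inl ⟨i, rfl⟩)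
  · exact Ideal.subset_span (Or.inr ⟨i, rfl⟩)
  · obtain ⟨j, hj⟩ := Set.mem_iUnion.1 hg
    split_ifs at hj
    · obtain ⟨i, rfl⟩ := hj
      exact Ideal.mul_mem_left _ _ (Ideal.subset_span (Or.inl ⟨j, rfl⟩))
    · simp at hj

theorem Rplus_mul_span_le_trimmedIdeal :
    Rplus k * Ideal.span (Set.range φ) ≤ trimmedIdeal φ ψ m := by
  rw [Rplus, Ideal.span_mul_span', Ideal.span_le, trimmedIdeal_eq_span]
  rintro _ ⟨_, ⟨i, rfl⟩, _, ⟨j, rfl⟩, rfl⟩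
  by_cases hj : (j : ℕ) < m
  · exact Ideal.mul_mem_left _ _ (Ideal.subset_span (Or.inl (Or.inl ⟨j, hj, rfl⟩)))
  · refine Ideal.subset_span (Or.inr (Set.mem_iUnion.2 ⟨j, ?_⟩))
    rw [if_pos (not_lt.1 hj)]
    exact ⟨i, rfl⟩

attribute [local instance] MvPolynomial.gradedAlgebra in
theorem trimmedIdeal_inf_gpiece_of_lt (hφ : ∀ i, (φ i).IsHomogeneous s)
    (hψ : ∀ i, (ψ i).IsHomogeneous (s + 1)) {n : ℕ} (hn : s < n) :
    (trimmedIdeal φ ψ m).restrictScalars k ⊓ gpiece k n =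
      (Ideal.span (Set.range φ ∪ Set.range ψ)).restrictScalars k ⊓ gpiece k n := by
  refine le_antisymm (inf_le_inf_right _ trimmedIdeal_le_span) fun f hf => ?_
  obtain ⟨hf, hfn⟩ := Submodule.mem_inf.1 hf
  refine Submodule.mem_inf.2 ⟨?_, hfn⟩
  rw [Submodule.restrictScalars_mem, Ideal.span_union] at hf
  obtain ⟨x, hx, y, hy, rfl⟩ := Submodule.mem_sup.1 hf
  rw [Submodule.restrictScalars_mem,
    ← homogeneousComponent_eq_self ((mem_homogeneousSubmodule n _).1 hfn), map_add]
  refine add_mem (Rplus_mul_span_le_trimmedIdeal ?_) ?_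
  · exact homogeneousComponent_mem_idealOfVars_mul
      (by rintro _ ⟨i, rfl⟩; exact ⟨s, hn, hφ i⟩) hx
  · have hψ' : Ideal.span (Set.range ψ) ≤ trimmedIdeal φ ψ m := by
      rw [trimmedIdeal_eq_span]
      exact Ideal.span_mono fun g hg => Or.inl (Or.inr hg)
    refine hψ' (homogeneousComponent_mem_of_mem ?_ hy n)
    exact Ideal.homogeneous_span _ _ (by rintro _ ⟨i, rfl⟩; exact ⟨s + 1, hψ i⟩)

theorem span_inf_gpiece_of_lt (hφ : ∀ i, (φ i).IsHomogeneous s)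
    (hψ : ∀ i, (ψ i).IsHomogeneous (s + 1)) {n : ℕ} (hn : n < s) :
    (Ideal.span (Set.range φ ∪ Set.range ψ)).restrictScalars k ⊓ gpiece k n = ⊥ := by
  rw [restrictScalars_span_inf_homogeneousSubmodule (S₀ := ∅) (by simp), Submodule.span_empty]
  rintro _ (⟨i, rfl⟩ | ⟨i, rfl⟩) -
  · exact ⟨s, hn, hφ i⟩
  · exact ⟨s + 1, by omega, hψ i⟩

theorem span_inf_gpiece_self (hφ : ∀ i, (φ i).IsHomogeneous s)
    (hψ : ∀ i, (ψ i).IsHomogeneous (s + 1)) :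
    (Ideal.span (Set.range φ ∪ Set.range ψ)).restrictScalars k ⊓ gpiece k s =
      Submodule.span k (Set.range φ) := by
  refine restrictScalars_span_inf_homogeneousSubmodule
    (by rintro _ ⟨i, rfl⟩; exact ⟨Or.inl ⟨i, rfl⟩, hφ i⟩) ?_
  rintro _ (⟨i, rfl⟩ | ⟨i, rfl⟩) hg
  · exact absurd ⟨i, rfl⟩ hg
  · exact ⟨s + 1, by omega, hψ i⟩

theorem trimmedIdeal_inf_gpiece_self (hφ : ∀ i, (φ i).IsHomogeneous s)
    (hψ : ∀ i, (ψ i).IsHomogeneous (s + 1)) :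
    (trimmedIdeal φ ψ m).restrictScalars k ⊓ gpiece k s =
      Submodule.span k (φ '' {i : Fin a | (i : ℕ) < m}) := by
  rw [trimmedIdeal_eq_span]
  refine restrictScalars_span_inf_homogeneousSubmodule
    (by rintro _ ⟨i, hi, rfl⟩; exact ⟨Or.inl (Or.inl ⟨i, hi, rfl⟩), hφ i⟩)
    fun g hg hg₀ => ?_
  rcases isHomogeneous_of_mem_trimmedGenerators hφ hψ hg with hg' | hg'
  · exact absurd hg' hg₀
  · exact ⟨s + 1, by omega, hg'⟩

theorem finrank_span_image_lt (hind : LinearIndependent k φ) (hm : m ≤ a) :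
    finrank k (Submodule.span k (φ '' {i : Fin a | (i : ℕ) < m})) = m := by
  rw [Set.image_eq_range]
  exact (finrank_span_eq_card (hind.comp _ Subtype.val_injective)).trans
    (Fintype.card_fin_lt_of_le hm)

end Trimming

section TrimmedSocle

variable {k} {s b m : ℕ} {φ : Fin (s + 1) → MvPolynomial (Fin 3) k}
  {ψ : Fin b → MvPolynomial (Fin 3) k}

theorem socdim_trimmedIdeal_self (hφ : ∀ i, (φ i).IsHomogeneous s)
    (hψ : ∀ i, (ψ i).IsHomogeneous (s + 1)) (hind : LinearIndependent k φ) (hm : m ≤ s + 1)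
    (hsoc : socdim k (Ideal.span (Set.range φ ∪ Set.range ψ)) s = 0) :
    socdim k (trimmedIdeal φ ψ m) s = s + 1 - m := by
  rw [socdim_eq_pdim_sub, pdim, pdim,
    colon_Rplus_inf_gpiece_eq (trimmedIdeal_inf_gpiece_of_lt hφ hψ s.lt_succ_self),
    colon_Rplus_inf_gpiece_eq_of_socdim_eq_zero hsoc, span_inf_gpiece_self hφ hψ,
    trimmedIdeal_inf_gpiece_self hφ hψ, finrank_span_eq_card hind, finrank_span_image_lt hind hm,
    Fintype.card_fin]

theorem socdim_trimmedIdeal_of_lt (hφ : ∀ i, (φ i).IsHomogeneous s)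
    (hψ : ∀ i, (ψ i).IsHomogeneous (s + 1)) {n : ℕ} (hn : s < n) :
    socdim k (trimmedIdeal φ ψ m) n = socdim k (Ideal.span (Set.range φ ∪ Set.range ψ)) n :=
  socdim_eq_of_inf_gpiece_eq (trimmedIdeal_inf_gpiece_of_lt hφ hψ hn)
    (trimmedIdeal_inf_gpiece_of_lt hφ hψ (by omega))

theorem socdim_trimmedIdeal_le_of_lt (hφ : ∀ i, (φ i).IsHomogeneous s)
    (hψ : ∀ i, (ψ i).IsHomogeneous (s + 1)) {n : ℕ} (hn : n < s) :
    socdim k (trimmedIdeal φ ψ m) n ≤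
      socdim k (Ideal.span (Set.range φ ∪ Set.range ψ)) n := by
  have hIt := span_inf_gpiece_of_lt hφ hψ hn
  refine socdim_le_of_le trimmedIdeal_le_span ?_
  rw [hIt, ← le_bot_iff, ← hIt]
  exact inf_le_inf_right _ trimmedIdeal_le_span

theorem typeOf_trimmedIdeal (hs : 2 ≤ s) (hφ : ∀ i, (φ i).IsHomogeneous s)
    (hψ : ∀ i, (ψ i).IsHomogeneous (s + 1)) (hind : LinearIndependent k φ) (hm : m ≤ s + 1)
    (hGor : IsArtinianGorenstein k (Ideal.span (Set.range φ ∪ Set.range ψ)) (2 * s - 1)) :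
    typeOf k (trimmedIdeal φ ψ m) = s + 1 - m + 1 := by
  have hsoc :
      ∀ n, n ≠ 2 * s - 1 → socdim k (Ideal.span (Set.range φ ∪ Set.range ψ)) n = 0 :=
    fun n hn => by rw [hGor.1 n, if_neg hn]
  rw [typeOf_eq_sum_socdim (isHomogeneous_trimmedIdeal hφ hψ) {s, 2 * s - 1},
    Finset.sum_pair (by omega), socdim_trimmedIdeal_self hφ hψ hind hm (hsoc s (by omega)),
    socdim_trimmedIdeal_of_lt hφ hψ (by omega), hGor.1, if_pos rfl]
  intro n hn
  rw [Finset.mem_insert, Finset.mem_singleton, not_or] at hn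
  rcases lt_or_gt_of_ne hn.1 with h | h
  · exact Nat.eq_zero_of_le_zero (hsoc n (by omega) ▸ socdim_trimmedIdeal_le_of_lt hφ hψ h)
  · rw [socdim_trimmedIdeal_of_lt hφ hψ h, hsoc n hn.2]

end TrimmedSocle

theorem type_of_trimmed_gorenstein_general (k : Type) [Field k] (s b : ℕ) (hs : 3 ≤ s)
    (It : Ideal (MvPolynomial (Fin 3) k))
    (hGor : IsArtinianGorenstein k It (2 * s - 1))
    (φ : Fin (s + 1) → MvPolynomial (Fin 3) k) (ψ : Fin b → MvPolynomial (Fin 3) k)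
    (hφ : ∀ i, (φ i).IsHomogeneous s) (hψ : ∀ i, (ψ i).IsHomogeneous (s + 1))
    (hspan : It = Ideal.span (Set.range φ ∪ Set.range ψ))
    (hmin : nu k It = s + 1 + b) :
    (∀ ℓ : ℕ, 1 ≤ ℓ → ℓ ≤ s + 1 →
      typeOf k
        (Ideal.span ((φ '' {i : Fin (s + 1) | (i : ℕ) < s + 1 - ℓ}) ∪ Set.range ψ) ⊔
          ⨆ j : Fin (s + 1),
            if s + 1 - ℓ ≤ (j : ℕ) then Rplus k * Ideal.span {φ j} else ⊥) = ℓ + 1) ∧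
    typeOf k
      (Ideal.span (Set.range ψ) ⊔ ⨆ j : Fin (s + 1), Rplus k * Ideal.span {φ j}) =
        s + 2 := by
  subst hspan
  have hind : LinearIndependent k φ := by
    refine (linearIndependent_of_nu_eq_card (Sum.elim φ ψ) ?_).comp Sum.inl Sum.inl_injective
    rw [Set.Sum.elim_range, hmin, Fintype.card_sum, Fintype.card_fin, Fintype.card_fin]
  have htype (m : ℕ) (hm : m ≤ s + 1) : typeOf k (trimmedIdeal φ ψ m) = s + 1 - m + 1 :=
    typeOf_trimmedIdeal (by omega) hφ hψ hind hm hGor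
  refine ⟨fun ℓ _ hℓ => (htype (s + 1 - ℓ) (by omega)).trans (by omega), ?_⟩
  have hJ : trimmedIdeal φ ψ 0 =
      Ideal.span (Set.range ψ) ⊔ ⨆ j : Fin (s + 1), Rplus k * Ideal.span {φ j} := by
    simp [trimmedIdeal]
  rw [← hJ, htype 0 (by omega)]
  rfl

/-- Let `I_t ⊆ k[x,y,z]` be a grade 3 homogeneous compressed Gorenstein
ideal of socle degree `2s-1` (`s ≥ 3`), minimally generated by `φ_1,…,φ_{s+1}` of degree
`s` and `ψ_1,…,ψ_b` of degree `s+1`.  For any `1 ≤ ℓ ≤ s+1`, the trimmed ideal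
`J = (φ_1,…,φ_{s+1-ℓ}, ψ_1,…,ψ_b) + R_+φ_{s+2-ℓ} + ⋯ + R_+φ_{s+1}` defines a ring of
Cohen–Macaulay type `ℓ+1`; in particular `(I_t)_{≥ s+1}` defines a ring of type `s+2`. -/
theorem type_of_trimmed_gorenstein (k : Type) [Field k] (s b : ℕ) (hs : 3 ≤ s)
    (hb : b < s + 1) (It : Ideal (MvPolynomial (Fin 3) k))
    (hGor : IsArtinianGorenstein k It (2 * s - 1))
    (hcomp : IsCompressedWithSocle k It s 0)
    (φ : Fin (s + 1) → MvPolynomial (Fin 3) k) (ψ : Fin b → MvPolynomial (Fin 3) k)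
    (hφ : ∀ i, (φ i).IsHomogeneous s) (hψ : ∀ i, (ψ i).IsHomogeneous (s + 1))
    (hspan : It = Ideal.span (Set.range φ ∪ Set.range ψ))
    (hmin : nu k It = s + 1 + b) :
    (∀ ℓ : ℕ, 1 ≤ ℓ → ℓ ≤ s + 1 →
      typeOf k
        (Ideal.span ((φ '' {i : Fin (s + 1) | (i : ℕ) < s + 1 - ℓ}) ∪ Set.range ψ) ⊔
          ⨆ j : Fin (s + 1),
            if s + 1 - ℓ ≤ (j : ℕ) then Rplus k * Ideal.span {φ j} else ⊥) = ℓ + 1) ∧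
    typeOf k
      (Ideal.span (Set.range ψ) ⊔ ⨆ j : Fin (s + 1), Rplus k * Ideal.span {φ j}) =
        s + 2 :=
  type_of_trimmed_gorenstein_general k s b hs It hGor φ ψ hφ hψ hspan hmin
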